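/- arXiv:2603.11581 — 4 statements merged into one kernel-verified Lean document; each statement's English description precedes it below -/
import Mathlib

section
/- Action of the autoparallel equation, affinely parametrized (Main Theorem): Let U ⊆ ℝⁿ be open and H : U → (Fin n → Fin n → ℝ) smooth with H(x) symmetric and invertible for every x. Let γ : I → U be a smooth curve on an open interval I with Σ_{a,b} H_{ab}(γ(λ)) γ'^a(λ) γ'^b(λ) ≠ 0 for all λ ∈ I, and set 𝓛(λ) := √|Σ_{a,b} H_{ab}(γ(λ)) γ'^a(λ) γ'^b(λ)|. Assume γ satisfies the Euler–Lagrange equations: for every index a and every λ ∈ I, d/dλ [ (1/𝓛(λ)) Σ_b H_{ab}(γ(λ)) γ'^b(λ) ] = (1/(2𝓛(λ))) Σ_{b,c} ∂_a H_{bc}(γ(λ)) γ'^b(λ) γ'^c(λ). Assume further that 𝓛 is constant on I (affine parametrization). Then γ satisfies the autoparallel equation of the Christoffel symbols of H: for all λ ∈ I and all a, γ''^a(λ) + Σ_{b,c} Γ[H]^a_{bc}(γ(λ)) γ'^b(λ) γ'^c(λ) = 0. -/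
open scoped BigOperators

/-- Partial derivative of `f` in the `a`-th coordinate direction of `ℝⁿ`. -/
noncomputable def pd {n : ℕ} (f : (Fin n → ℝ) → ℝ) (a : Fin n) (x : Fin n → ℝ) : ℝ :=
  fderiv ℝ f x (Pi.single a 1)

/-- Matrix inverse of a square array of reals. -/
noncomputable def minv {n : ℕ} (A : Fin n → Fin n → ℝ) : Fin n → Fin n → ℝ :=
  fun a b => (Matrix.of A)⁻¹ a b

/-- Christoffel symbols `Γ[H]^a_{bc}(x)` of a (pointwise symmetric, invertible) tensor `H`. -/
noncomputable def christoffel {n : ℕ} (H : (Fin n → ℝ) → Fin n → Fin n → ℝ)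
    (x : Fin n → ℝ) (a b c : Fin n) : ℝ :=
  (1 / 2) * ∑ d, minv (H x) a d *
    (pd (fun y => H y c d) b x + pd (fun y => H y b d) c x - pd (fun y => H y b c) d x)

/-- First derivative `γ'^a(t)` of a curve in `ℝⁿ`. -/
noncomputable def cderiv {n : ℕ} (γ : ℝ → Fin n → ℝ) (a : Fin n) (t : ℝ) : ℝ :=
  deriv (fun s => γ s a) t

/-- Second derivative `γ''^a(t)` of a curve in `ℝⁿ`. -/
noncomputable def cderiv2 {n : ℕ} (γ : ℝ → Fin n → ℝ) (a : Fin n) (t : ℝ) : ℝ :=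
  deriv (cderiv γ a) t

/-- The worldline Lagrangian `𝓛(λ) = √|Σ_{a,b} H_{ab}(γ(λ)) γ'^a(λ) γ'^b(λ)|`. -/
noncomputable def lag {n : ℕ} (H : (Fin n → ℝ) → Fin n → Fin n → ℝ)
    (γ : ℝ → Fin n → ℝ) (t : ℝ) : ℝ :=
  Real.sqrt |∑ a, ∑ b, H (γ t) a b * cderiv γ a t * cderiv γ b t|

/-!
Along an affinely parametrized curve `𝓛` is locally constant, so the factor `1/𝓛` leaves the
Euler–Lagrange equation, which becomes `d/dλ (H_{ab} γ'^b) = ½ ∂_a H_{bc} γ'^b γ'^c`.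
Expanding the left side by the chain rule and symmetrizing `∂_c H_{ab} γ'^b γ'^c` in `b, c`
turns it into `H_{ab} γ''^b + Γ_{abc} γ'^b γ'^c = 0` with the Christoffel symbols of the first
kind; contracting with `H⁻¹` raises the index.
-/

open Finset Filter Topology Matrix

section Calculus

variable {n : ℕ}

theorem pd_congr_of_eventuallyEq {f g : (Fin n → ℝ) → ℝ} {x : Fin n → ℝ} (h : f =ᶠ[𝓝 x] g)
    (a : Fin n) : pd f a x = pd g a x := by
  rw [pd, pd, h.fderiv_eq]

theorem cderiv_eq_deriv_apply {γ : ℝ → Fin n → ℝ} {t : ℝ} (hγ : DifferentiableAt ℝ γ t)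
    (a : Fin n) : cderiv γ a t = deriv γ t a :=
  (hasDerivAt_pi.1 hγ.hasDerivAt a).deriv

theorem ContDiffOn.cderiv {γ : ℝ → Fin n → ℝ} {I : Set ℝ} {k m : WithTop ℕ∞}
    (hγ : ContDiffOn ℝ k γ I) (hI : IsOpen I) (hmk : m + 1 ≤ k) (a : Fin n) :
    ContDiffOn ℝ m (cderiv γ a) I :=
  (contDiffOn_pi.1 hγ a).deriv_of_isOpen hI hmk

theorem hasDerivAt_comp_curve {f : (Fin n → ℝ) → ℝ} {γ : ℝ → Fin n → ℝ} {t : ℝ}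
    (hf : DifferentiableAt ℝ f (γ t)) (hγ : DifferentiableAt ℝ γ t) :
    HasDerivAt (fun s => f (γ s)) (∑ c, pd f c (γ t) * cderiv γ c t) t := by
  have hsum : deriv γ t = ∑ c, cderiv γ c t • Pi.single c 1 := by
    ext a
    simp [cderiv_eq_deriv_apply hγ, Pi.single_apply]
  refine (hf.hasFDerivAt.comp_hasDerivAt t hγ.hasDerivAt).congr_deriv ?_
  rw [hsum, map_sum]
  simp only [map_smul, smul_eq_mul, pd, mul_comm]

theorem hasDerivAt_sum_comp_curve_mul_cderiv {g : Fin n → (Fin n → ℝ) → ℝ} {γ : ℝ → Fin n → ℝ}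
    {t : ℝ} (hg : ∀ b, DifferentiableAt ℝ (g b) (γ t)) (hγ : DifferentiableAt ℝ γ t)
    (hγ' : ∀ b, DifferentiableAt ℝ (cderiv γ b) t) :
    HasDerivAt (fun s => ∑ b, g b (γ s) * cderiv γ b s)
      (∑ b, ((∑ c, pd (g b) c (γ t) * cderiv γ c t) * cderiv γ b t
        + g b (γ t) * cderiv2 γ b t)) t :=
  HasDerivAt.fun_sum fun b _ => (hasDerivAt_comp_curve (hg b) hγ).mul (hγ' b).hasDerivAt

end Calculus

theorem eq_half_of_deriv_one_div_mul_eq {L p : ℝ → ℝ} {p' r t : ℝ} (hp : HasDerivAt p p' t)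
    (hL : ∀ᶠ s in 𝓝 t, L s = L t) (hL0 : L t ≠ 0)
    (h : deriv (fun s => 1 / L s * p s) t = 1 / (2 * L t) * r) : p' = r / 2 := by
  have hd : HasDerivAt (fun s => 1 / L s * p s) (1 / L t * p') t :=
    (hp.const_mul (1 / L t)).congr_of_eventuallyEq (hL.mono fun s hs => by simp only [hs])
  rw [hd.deriv] at h
  field_simp at h
  linarith

section Christoffel

variable {n : ℕ} {H : (Fin n → ℝ) → Fin n → Fin n → ℝ} {x : Fin n → ℝ}

/-- Christoffel symbols of the first kind, lowered index first: `Γ^a_{bc} = H^{ad} Γ_{dbc}`. -/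
noncomputable def christoffelFirst (H : (Fin n → ℝ) → Fin n → Fin n → ℝ) (x : Fin n → ℝ)
    (d b c : Fin n) : ℝ :=
  (1 / 2) * (pd (fun y => H y c d) b x + pd (fun y => H y b d) c x - pd (fun y => H y b c) d x)

theorem sum_christoffel_mul_mul (H : (Fin n → ℝ) → Fin n → Fin n → ℝ) (x : Fin n → ℝ)
    (a : Fin n) (v : Fin n → ℝ) :
    ∑ b, ∑ c, christoffel H x a b c * v b * v c
      = ∑ d, minv (H x) a d * ∑ b, ∑ c, christoffelFirst H x d b c * v b * v c := by
  simp only [christoffel, christoffelFirst, mul_sum, sum_mul]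
  conv_rhs => rw [sum_comm]
  refine sum_congr rfl fun b _ => ?_
  conv_rhs => rw [sum_comm]
  exact sum_congr rfl fun c _ => sum_congr rfl fun d _ => by ring

theorem sum_christoffelFirst_mul_mul
    (hsym : ∀ p q c, pd (fun y => H y p q) c x = pd (fun y => H y q p) c x)
    (v : Fin n → ℝ) (d : Fin n) :
    ∑ b, ∑ c, christoffelFirst H x d b c * v b * v c
      = ∑ b, (∑ c, pd (fun y => H y d b) c x * v c) * v b
        - (∑ b, ∑ c, pd (fun y => H y b c) d x * v b * v c) / 2 := by
  have hsplit : ∑ b, ∑ c, christoffelFirst H x d b c * v b * v c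
      = (∑ b, ∑ c, pd (fun y => H y c d) b x * v b * v c
        + ∑ b, ∑ c, pd (fun y => H y b d) c x * v b * v c
        - ∑ b, ∑ c, pd (fun y => H y b c) d x * v b * v c) / 2 := by
    simp only [sum_div, ← sum_add_distrib, ← sum_sub_distrib]
    exact sum_congr rfl fun b _ => sum_congr rfl fun c _ => by unfold christoffelFirst; ring
  have hswap : ∑ b, ∑ c, pd (fun y => H y c d) b x * v b * v c
      = ∑ b, ∑ c, pd (fun y => H y b d) c x * v b * v c := by
    rw [sum_comm]
    exact sum_congr rfl fun b _ => sum_congr rfl fun c _ => by ring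
  have hcontract : ∑ b, ∑ c, pd (fun y => H y b d) c x * v b * v c
      = ∑ b, (∑ c, pd (fun y => H y d b) c x * v c) * v b := by
    simp only [sum_mul, hsym _ d]
    exact sum_congr rfl fun b _ => sum_congr rfl fun c _ => by ring
  rw [hsplit, hswap, hcontract]
  ring

theorem sum_mul_add_sum_christoffelFirst_mul_mul_eq_zero
    (hsym : ∀ p q c, pd (fun y => H y p q) c x = pd (fun y => H y q p) c x)
    {v w : Fin n → ℝ} {d : Fin n}
    (hEL : ∑ b, ((∑ c, pd (fun y => H y d b) c x * v c) * v b + H x d b * w b)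
      = (∑ b, ∑ c, pd (fun y => H y b c) d x * v b * v c) / 2) :
    ∑ b, H x d b * w b + ∑ b, ∑ c, christoffelFirst H x d b c * v b * v c = 0 := by
  rw [sum_christoffelFirst_mul_mul hsym, ← hEL, sum_add_distrib]
  ring

end Christoffel

theorem add_sum_minv_mul_eq_zero {n : ℕ} {A : Fin n → Fin n → ℝ} (hA : IsUnit (Matrix.of A).det)
    {w r : Fin n → ℝ} (h : ∀ d, ∑ b, A d b * w b + r d = 0) (a : Fin n) :
    w a + ∑ d, minv A a d * r d = 0 := by
  have hr : r = -(Matrix.of A *ᵥ w) := by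
    ext d
    simp only [Pi.neg_apply, mulVec, dotProduct, of_apply]
    linarith [h d]
  have hinv : (Matrix.of A)⁻¹ *ᵥ r = -w := by
    rw [hr, mulVec_neg, mulVec_mulVec, nonsing_inv_mul _ hA, one_mulVec]
  have ha := congrFun hinv a
  simp only [mulVec, dotProduct, Pi.neg_apply] at ha
  simp only [minv, ha]
  ring

theorem autoparallel_from_action_affine_general {n : ℕ} (U : Set (Fin n → ℝ)) (hU : IsOpen U)
    (H : (Fin n → ℝ) → Fin n → Fin n → ℝ)
    (hH : ContDiffOn ℝ (⊤ : ℕ∞) H U)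
    (hHsym : ∀ x ∈ U, ∀ a b, H x a b = H x b a)
    (hHinv : ∀ x ∈ U, IsUnit (Matrix.of (H x)).det)
    (I : Set ℝ) (hI : IsOpen I)
    (γ : ℝ → Fin n → ℝ) (hγ : ContDiffOn ℝ (⊤ : ℕ∞) γ I)
    (hmaps : ∀ t ∈ I, γ t ∈ U)
    (hne : ∀ t ∈ I, (∑ a, ∑ b, H (γ t) a b * cderiv γ a t * cderiv γ b t) ≠ 0)
    (hEL : ∀ a, ∀ t ∈ I,
      deriv (fun s => (1 / lag H γ s) * ∑ b, H (γ s) a b * cderiv γ b s) t =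
        (1 / (2 * lag H γ t)) *
          ∑ b, ∑ c, pd (fun y => H y b c) a (γ t) * cderiv γ b t * cderiv γ c t)
    (haffine : ∀ t ∈ I, ∀ s ∈ I, lag H γ t = lag H γ s) :
    ∀ t ∈ I, ∀ a, cderiv2 γ a t
      + ∑ b, ∑ c, christoffel H (γ t) a b c * cderiv γ b t * cderiv γ c t = 0 := by
  intro t ht a
  have hIt : I ∈ 𝓝 t := hI.mem_nhds ht
  have hUt : U ∈ 𝓝 (γ t) := hU.mem_nhds (hmaps t ht)
  have hγt : DifferentiableAt ℝ γ t := (hγ.contDiffAt hIt).differentiableAt (by simp)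
  have hγ't : ∀ b, DifferentiableAt ℝ (cderiv γ b) t := fun b =>
    ((hγ.cderiv hI (m := 1) (WithTop.coe_le_coe.2 le_top) b).contDiffAt hIt).differentiableAt
      one_ne_zero
  have hHt : ∀ p q, DifferentiableAt ℝ (fun y => H y p q) (γ t) := fun p q =>
    differentiableAt_pi.1 (differentiableAt_pi.1
      ((hH.contDiffAt hUt).differentiableAt (by simp)) p) q
  have hsym : ∀ p q c, pd (fun y => H y p q) c (γ t) = pd (fun y => H y q p) c (γ t) :=
    fun p q => pd_congr_of_eventuallyEq (eventually_of_mem hUt fun y hy => hHsym y hy p q)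
  have hLt : ∀ᶠ s in 𝓝 t, lag H γ s = lag H γ t :=
    eventually_of_mem hIt fun s hs => haffine s hs t ht
  have hL0 : lag H γ t ≠ 0 := (Real.sqrt_pos.2 (abs_pos.2 (hne t ht))).ne'
  have hlowered : ∀ d, ∑ b, H (γ t) d b * cderiv2 γ b t
      + ∑ b, ∑ c, christoffelFirst H (γ t) d b c * cderiv γ b t * cderiv γ c t = 0 := fun d =>
    sum_mul_add_sum_christoffelFirst_mul_mul_eq_zero hsym <| eq_half_of_deriv_one_div_mul_eq
      (hasDerivAt_sum_comp_curve_mul_cderiv (hHt d) hγt hγ't) hLt hL0 (hEL d t ht)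
  rw [sum_christoffel_mul_mul]
  exact add_sum_minv_mul_eq_zero (hHinv _ (hmaps t ht)) hlowered a

/-- **Action of the autoparallel equation, affinely parametrized** (Main Theorem): if `γ`
satisfies the Euler–Lagrange equations of `𝓛 = √|H_{ab} γ'^a γ'^b|` and `𝓛` is constant on `I`,
then `γ` satisfies the autoparallel equation of the Christoffel symbols of `H`. -/
theorem autoparallel_from_action_affine {n : ℕ} (U : Set (Fin n → ℝ)) (hU : IsOpen U)
    (H : (Fin n → ℝ) → Fin n → Fin n → ℝ)
    (hH : ContDiffOn ℝ (⊤ : ℕ∞) H U)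
    (hHsym : ∀ x ∈ U, ∀ a b, H x a b = H x b a)
    (hHinv : ∀ x ∈ U, IsUnit (Matrix.of (H x)).det)
    (I : Set ℝ) (hI : IsOpen I) (hIconn : IsPreconnected I)
    (γ : ℝ → Fin n → ℝ) (hγ : ContDiffOn ℝ (⊤ : ℕ∞) γ I)
    (hmaps : ∀ t ∈ I, γ t ∈ U)
    (hne : ∀ t ∈ I, (∑ a, ∑ b, H (γ t) a b * cderiv γ a t * cderiv γ b t) ≠ 0)
    (hEL : ∀ a, ∀ t ∈ I,
      deriv (fun s => (1 / lag H γ s) * ∑ b, H (γ s) a b * cderiv γ b s) t =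
        (1 / (2 * lag H γ t)) *
          ∑ b, ∑ c, pd (fun y => H y b c) a (γ t) * cderiv γ b t * cderiv γ c t)
    (haffine : ∀ t ∈ I, ∀ s ∈ I, lag H γ t = lag H γ s) :
    ∀ t ∈ I, ∀ a, cderiv2 γ a t
      + ∑ b, ∑ c, christoffel H (γ t) a b c * cderiv γ b t * cderiv γ c t = 0 :=
  autoparallel_from_action_affine_general U hU H hH hHsym hHinv I hI γ hγ hmaps hne hEL haffine
end

section
/- Most general force variational with multiplier e^{−ω} g (Proposition 3.2): Let U ⊆ ℝⁿ be open, g : U → (Fin n → Fin n → ℝ) smooth with g(x) symmetric and invertible for every x, ω : U → ℝ smooth, and F : U × ℝⁿ → ℝⁿ smooth. Suppose there exists a smooth Lagrangian 𝓛 : U × ℝⁿ → ℝ whose Euler–Lagrange expression matches the system with multiplier H_{ab} := e^{−ω} g_{ab}, i.e. for all x ∈ U, v ∈ ℝⁿ, w ∈ ℝⁿ and every index a: Σ_b (∂²𝓛/∂v^a∂v^b)(x,v) w^b + Σ_b (∂²𝓛/∂x^b∂v^a)(x,v) v^b − (∂𝓛/∂x^a)(x,v) = Σ_b e^{−ω(x)}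 g_{ab}(x) (w^b − F^b(x,v)). Then there exist smooth maps P : U → (Fin n → Fin n → ℝ) and S : U → (Fin n → ℝ) such that for all x ∈ U, v ∈ ℝⁿ and every index a: F^a(x,v) = −Σ_{b,c} (Γ[g]^a_{bc}(x) + L^a_{bc}(x)) v^b v^c + Σ_b P^a_b(x) v^b + S^a(x), where L^a_{bc} := ½ Σ_d g⁻¹^{ad} ∂_d ω g_{bc} − ½ (∂_b ω δ^a_c + ∂_c ω δ^a_b) is the disformation tensor of the Weyl non-metricity Q_{abc} = ∂_a ω g_{bc}. -/
/-!
Comparing the coefficients of the acceleration `w` in the Euler–Lagrange equation shows that the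
velocity Hessian of the Lagrangian is `H = e^{-ω} g`, so the Lagrangian is quadratic in the
velocity: `B + A_b v^b + ½ H_{bc} v^b v^c`. The acceleration-free part of the Euler–Lagrange
equation then writes `H_{ab} F^b` as a quadratic polynomial in `v` whose quadratic coefficient is
`½ ∂_a H_{bc} - ∂_c H_{ab}`. Inverting `H` and using `∂H = e^{-ω} (∂g - ∂ω g)`, the part of
`e^{ω} g^{ae} (½ ∂_e H_{bc} - ∂_c H_{eb})` that is symmetric in `b, c` is
`-(Γ[g] + L)^a_{bc}`, with `L` the disformation of the Weyl non-metricity.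
-/

open scoped BigOperators

/-- Partial derivative in the `a`-th position coordinate of the first slot of `U × ℝⁿ`. -/
noncomputable def pdx {n : ℕ} (f : (Fin n → ℝ) × (Fin n → ℝ) → ℝ) (a : Fin n)
    (p : (Fin n → ℝ) × (Fin n → ℝ)) : ℝ :=
  fderiv ℝ f p (Pi.single a 1, 0)

/-- Partial derivative in the `a`-th velocity coordinate of the second slot of `U × ℝⁿ`. -/
noncomputable def pdv {n : ℕ} (f : (Fin n → ℝ) × (Fin n → ℝ) → ℝ) (a : Fin n)
    (p : (Fin n → ℝ) × (Fin n → ℝ)) : ℝ :=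
  fderiv ℝ f p (0, Pi.single a 1)

open Finset
open scoped Matrix

variable {n : ℕ}

section Algebra

variable {ι : Type*} [Fintype ι]

lemma coeff_eq_of_forall_sum_mul_add_eq [DecidableEq ι] {p q f : ι → ℝ} {r : ℝ}
    (h : ∀ w : ι → ℝ, ∑ b, p b * w b + r = ∑ b, q b * (w b - f b)) : p = q := by
  funext b
  have h₀ := h 0
  have h₁ := h (Pi.single b 1)
  simp only [Pi.single_apply, mul_sub, sum_sub_distrib, mul_ite, mul_one, mul_zero, sum_ite_eq',
    mem_univ, if_true, Pi.zero_apply, sum_const_zero, zero_sub, zero_add, mul_neg,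
    sum_neg_distrib] at h₀ h₁
  linarith

lemma sum_mul_quadratic (m s : ι → ℝ) (α : ι → ι → ℝ) (β : ι → ι → ι → ℝ) (v : ι → ℝ) :
    ∑ e, m e * (s e + ∑ b, α e b * v b + ∑ b, ∑ c, β e b c * v b * v c)
      = ∑ b, ∑ c, (∑ e, m e * β e b c) * v b * v c + ∑ b, (∑ e, m e * α e b) * v b
        + ∑ e, m e * s e := by
  have hlin : ∑ e, m e * ∑ b, α e b * v b = ∑ b, (∑ e, m e * α e b) * v b := by
    simp only [mul_sum, sum_mul]
    rw [sum_comm]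
    exact sum_congr rfl fun b _ => sum_congr rfl fun e _ => by ring
  have hquad : ∑ e, m e * ∑ b, ∑ c, β e b c * v b * v c
      = ∑ b, ∑ c, (∑ e, m e * β e b c) * v b * v c := by
    simp only [mul_sum, sum_mul]
    rw [sum_comm]
    refine sum_congr rfl fun b _ => ?_
    rw [sum_comm]
    exact sum_congr rfl fun c _ => sum_congr rfl fun e _ => by ring
  simp only [mul_add, sum_add_distrib, hlin, hquad]
  ring

lemma sum_sum_mul_eq_of_add_swap_eq {X Y : ι → ι → ℝ}
    (h : ∀ b c, X b c + X c b = Y b c + Y c b) (v : ι → ℝ) :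
    ∑ b, ∑ c, X b c * v b * v c = ∑ b, ∑ c, Y b c * v b * v c := by
  have hsymm : ∀ Z : ι → ι → ℝ, ∑ b, ∑ c, Z b c * v b * v c
      = (1 / 2) * ∑ b, ∑ c, (Z b c + Z c b) * v b * v c := by
    intro Z
    have hswap : ∑ b, ∑ c, Z c b * v b * v c = ∑ b, ∑ c, Z b c * v b * v c := by
      rw [sum_comm]
      exact sum_congr rfl fun b _ => sum_congr rfl fun c _ => by ring
    simp only [add_mul, sum_add_distrib, hswap]
    ring
  rw [hsymm X, hsymm Y]
  simp only [h]

end Algebra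

lemma eq_sum_minv_mul_of_sum_mul_eq {G : Fin n → Fin n → ℝ} (hG : IsUnit (Matrix.of G).det)
    {c : ℝ} (hc : c ≠ 0) {y R : Fin n → ℝ} (h : ∀ a, ∑ b, c * G a b * y b = R a) (e : Fin n) :
    y e = ∑ a, c⁻¹ * minv G e a * R a := by
  have hGy : Matrix.of G *ᵥ y = c⁻¹ • R := by
    funext a
    simp only [Matrix.mulVec, dotProduct, Matrix.of_apply, Pi.smul_apply, smul_eq_mul, ← h a,
      mul_sum]
    exact sum_congr rfl fun b _ => by field_simp
  have hy : y = (Matrix.of G)⁻¹ *ᵥ (c⁻¹ • R) := by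
    rw [← hGy, Matrix.mulVec_mulVec, Matrix.nonsing_inv_mul _ hG, Matrix.one_mulVec]
  rw [hy]
  simp only [Matrix.mulVec, dotProduct, Pi.smul_apply, smul_eq_mul, minv]
  exact sum_congr rfl fun a _ => by ring

section PartialDerivative

variable {f h : (Fin n → ℝ) → ℝ} {a : Fin n} {x : Fin n → ℝ}

lemma pd_add (hf : DifferentiableAt ℝ f x) (hh : DifferentiableAt ℝ h x) :
    pd (fun y => f y + h y) a x = pd f a x + pd h a x := by
  simp [pd, fderiv_fun_add hf hh]

lemma pd_mul (hf : DifferentiableAt ℝ f x) (hh : DifferentiableAt ℝ h x) :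
    pd (fun y => f y * h y) a x = pd f a x * h x + f x * pd h a x := by
  simp [pd, fderiv_fun_mul hf hh]
  ring

lemma pd_const_mul (hf : DifferentiableAt ℝ f x) (c : ℝ) :
    pd (fun y => c * f y) a x = c * pd f a x := by
  simp [pd, fderiv_const_mul hf]

lemma pd_mul_const (hf : DifferentiableAt ℝ f x) (c : ℝ) :
    pd (fun y => f y * c) a x = pd f a x * c := by
  rw [pd, pd, fderiv_mul_const hf]
  exact mul_comm _ _

lemma pd_sum {ι : Type*} {s : Finset ι} {F : ι → (Fin n → ℝ) → ℝ}
    (hF : ∀ i ∈ s, DifferentiableAt ℝ (F i) x) :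
    pd (fun y => ∑ i ∈ s, F i y) a x = ∑ i ∈ s, pd (F i) a x := by
  simp [pd, fderiv_fun_sum hF]

lemma pd_const (c : ℝ) : pd (fun _ => c) a x = 0 := by
  simp [pd]

lemma pd_exp (hf : DifferentiableAt ℝ f x) :
    pd (fun y => Real.exp (f y)) a x = Real.exp (f x) * pd f a x := by
  simp [pd, hf]

lemma pd_neg : pd (fun y => -f y) a x = -pd f a x := by
  simp [pd, fderiv_fun_neg]

lemma pd_exp_neg_mul (hf : DifferentiableAt ℝ f x) (hh : DifferentiableAt ℝ h x) :
    pd (fun y => Real.exp (-f y) * h y) a x = Real.exp (-f x) * (pd h a x - pd f a x * h x) := by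
  rw [pd_mul (by fun_prop) hh, pd_exp (by fun_prop), pd_neg]
  ring

lemma pd_apply (b : Fin n) : pd (fun y => y b) a x = if a = b then 1 else 0 := by
  simp [pd, (hasFDerivAt_apply b x).fderiv, Pi.single_apply, eq_comm]

lemma Filter.EventuallyEq.pd_eq (hfh : f =ᶠ[nhds x] h) : pd f a x = pd h a x := by
  simp only [pd, hfh.fderiv_eq]

lemma pd_linear_form (c : Fin n → ℝ) : pd (fun y => ∑ b, c b * y b) a x = c a := by
  rw [pd_sum fun b _ => by fun_prop]
  simp [pd_const_mul (differentiableAt_apply _ _), pd_apply]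

lemma pd_quadratic_form {H : Fin n → Fin n → ℝ} (hH : ∀ b c, H b c = H c b) :
    pd (fun y => (1 / 2) * ∑ b, ∑ c, H b c * y b * y c) a x = ∑ b, H a b * x b := by
  rw [pd_const_mul (by fun_prop), pd_sum fun b _ => by fun_prop]
  have hrow : ∀ b, pd (fun y => ∑ c, H b c * y b * y c) a x
      = ∑ c, H b c * ((if a = b then 1 else 0) * x c + x b * if a = c then 1 else 0) :=
    fun b => by
      rw [pd_sum fun c _ => by fun_prop]
      refine sum_congr rfl fun c _ => ?_
      rw [pd_mul (by fun_prop) (by fun_prop), pd_const_mul (by fun_prop), pd_apply, pd_apply]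
      ring
  simp only [hrow, mul_add, sum_add_distrib, mul_ite, mul_one, mul_zero, ite_mul, zero_mul,
    one_mul, sum_ite_irrel, sum_const_zero, sum_ite_eq, mem_univ, if_true, hH _ a]
  ring

lemma pd_linear_form_coeff {A : (Fin n → ℝ) → Fin n → ℝ}
    (hA : ∀ b, DifferentiableAt ℝ (fun y => A y b) x) (v : Fin n → ℝ) :
    pd (fun y => ∑ b, A y b * v b) a x = ∑ b, pd (fun y => A y b) a x * v b := by
  rw [pd_sum fun b _ => (hA b).mul_const _]
  exact sum_congr rfl fun b _ => pd_mul_const (hA b) _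

lemma pd_quadratic_form_coeff {H : (Fin n → ℝ) → Fin n → Fin n → ℝ}
    (hH : ∀ b c, DifferentiableAt ℝ (fun y => H y b c) x) (v : Fin n → ℝ) :
    pd (fun y => (1 / 2) * ∑ b, ∑ c, H y b c * v b * v c) a x
      = (1 / 2) * ∑ b, ∑ c, pd (fun y => H y b c) a x * v b * v c := by
  rw [pd_const_mul (by fun_prop), pd_sum fun b _ => by fun_prop]
  congr 1
  refine sum_congr rfl fun b _ => ?_
  rw [pd_sum fun c _ => ((hH b c).mul_const _).mul_const _]
  exact sum_congr rfl fun c _ => by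
    rw [pd_mul_const ((hH b c).mul_const _), pd_mul_const (hH b c)]

lemma sub_eq_sub_of_pd_eq {φ ψ : (Fin n → ℝ) → ℝ} (hφ : Differentiable ℝ φ)
    (hψ : Differentiable ℝ ψ) (h : ∀ y b, pd φ b y = pd ψ b y) (y z : Fin n → ℝ) :
    φ y - φ z = ψ y - ψ z := by
  rw [sub_eq_sub_iff_sub_eq_sub]
  refine is_const_of_fderiv_eq_zero (hφ.sub hψ) (fun w => ?_) y z
  rw [fderiv_sub (hφ w) (hψ w), sub_eq_zero]
  exact ContinuousLinearMap.coe_injective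
    ((Pi.basisFun ℝ (Fin n)).ext fun b => by simpa [pd] using h w b)

lemma eq_quadratic_of_pd_pd_eq {ℓ : (Fin n → ℝ) → ℝ} (hℓ : ContDiff ℝ 2 ℓ)
    {H : Fin n → Fin n → ℝ} (hH : ∀ b c, H b c = H c b)
    (hHess : ∀ v a b, pd (pd ℓ a) b v = H a b) (v : Fin n → ℝ) :
    ℓ v = ℓ 0 + ∑ b, pd ℓ b 0 * v b + (1 / 2) * ∑ b, ∑ c, H b c * v b * v c := by
  have hpd : ∀ a, Differentiable ℝ (pd ℓ a) := fun a =>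
    ((hℓ.fderiv_right (m := 1) le_rfl).clm_apply contDiff_const).differentiable one_ne_zero
  have hgrad : ∀ u a, pd ℓ a u = pd ℓ a 0 + ∑ b, H a b * u b := fun u a => by
    have := sub_eq_sub_of_pd_eq (hpd a) (ψ := fun y => ∑ b, H a b * y b) (by fun_prop)
      (fun y b => by rw [hHess, pd_linear_form]) u 0
    simp only [Pi.zero_apply, mul_zero, sum_const_zero, sub_zero] at this
    linarith
  have := sub_eq_sub_of_pd_eq (hℓ.differentiable two_ne_zero)
    (ψ := fun y => ∑ b, pd ℓ b 0 * y b + (1 / 2) * ∑ b, ∑ c, H b c * y b * y c) (by fun_prop)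
    (fun y a => by
      rw [hgrad, pd_add (by fun_prop) (by fun_prop), pd_linear_form, pd_quadratic_form hH]) v 0
  simp only [Pi.zero_apply, mul_zero, sum_const_zero, add_zero, sub_zero] at this
  linarith

end PartialDerivative

section Smoothness

variable {E : Type*} [NormedAddCommGroup E] [NormedSpace ℝ E] {k m : WithTop ℕ∞}

lemma ContDiffOn.fderiv_apply_of_isOpen {f : E → ℝ} {s : Set E} (hf : ContDiffOn ℝ k f s)
    (hs : IsOpen s) (hmk : m + 1 ≤ k) (w : E) : ContDiffOn ℝ m (fun p => fderiv ℝ f p w) s :=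
  (hf.fderiv_of_isOpen hs hmk).clm_apply contDiffOn_const

lemma ContDiffOn.pdv {L : (Fin n → ℝ) × (Fin n → ℝ) → ℝ} {s : Set ((Fin n → ℝ) × (Fin n → ℝ))}
    (hL : ContDiffOn ℝ k L s) (hs : IsOpen s) (hmk : m + 1 ≤ k) (a : Fin n) :
    ContDiffOn ℝ m (pdv L a) s :=
  hL.fderiv_apply_of_isOpen hs hmk _

lemma ContDiffOn.comp_prodMk_zero {F : Type*} [NormedAddCommGroup F] [NormedSpace ℝ F]
    {f : E × F → ℝ} {U : Set E} (hf : ContDiffOn ℝ k f (U ×ˢ Set.univ)) :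
    ContDiffOn ℝ k (fun y => f (y, 0)) U :=
  hf.comp (contDiff_id.prodMk contDiff_const).contDiffOn fun _ hy => ⟨hy, trivial⟩

variable {ι : Type*} [Fintype ι] [DecidableEq ι] {M : E → Matrix ι ι ℝ} {s : Set E}

lemma contDiffOn_matrix_det (hM : ∀ i j, ContDiffOn ℝ k (fun x => M x i j) s) :
    ContDiffOn ℝ k (fun x => (M x).det) s := by
  simp_rw [Matrix.det_apply']
  exact ContDiffOn.sum fun σ _ => contDiffOn_const.mul (contDiffOn_prod fun i _ => hM (σ i) i)

lemma contDiffOn_matrix_inv_apply (hM : ∀ i j, ContDiffOn ℝ k (fun x => M x i j) s)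
    (hdet : ∀ x ∈ s, IsUnit (M x).det) (i j : ι) :
    ContDiffOn ℝ k (fun x => (M x)⁻¹ i j) s := by
  have hadj : ContDiffOn ℝ k (fun x => (M x).adjugate i j) s := by
    simp only [Matrix.adjugate_apply]
    refine contDiffOn_matrix_det fun r c => ?_
    by_cases hr : r = j
    · simpa [Matrix.updateRow_apply, hr] using contDiffOn_const
    · simpa [Matrix.updateRow_apply, hr] using hM r c
  refine (((contDiffOn_matrix_det hM).inv fun x hx => (hdet x hx).ne_zero).mul hadj).congr
    fun x _ => ?_
  simp [Matrix.inv_def, Ring.inverse_eq_inv']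

end Smoothness

section Slices

variable {L : (Fin n → ℝ) × (Fin n → ℝ) → ℝ} {x v : Fin n → ℝ}

lemma pdv_eq_pd_slice (hL : DifferentiableAt ℝ L (x, v)) (a : Fin n) :
    pdv L a (x, v) = pd (fun u => L (x, u)) a v := by
  have hslice : HasFDerivAt (fun u => L (x, u))
      ((fderiv ℝ L (x, v)).comp ((0 : (Fin n → ℝ) →L[ℝ] (Fin n → ℝ)).prod (.id ℝ _))) v :=
    hL.hasFDerivAt.comp v ((hasFDerivAt_const x v).prodMk (hasFDerivAt_id v))
  rw [pdv, pd, hslice.fderiv]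
  simp

lemma pdx_eq_pd_slice (hL : DifferentiableAt ℝ L (x, v)) (a : Fin n) :
    pdx L a (x, v) = pd (fun y => L (y, v)) a x := by
  have hslice : HasFDerivAt (fun y => L (y, v))
      ((fderiv ℝ L (x, v)).comp ((ContinuousLinearMap.id ℝ _).prod (0 : (Fin n → ℝ) →L[ℝ] _))) x :=
    hL.hasFDerivAt.comp x ((hasFDerivAt_id x).prodMk (hasFDerivAt_const v x))
  rw [pdx, pd, hslice.fderiv]
  simp

end Slices

section Lagrangian

variable {U : Set (Fin n → ℝ)} {L : (Fin n → ℝ) × (Fin n → ℝ) → ℝ} {x : Fin n → ℝ}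

lemma lagrangian_eq_quadratic (hU : IsOpen U) (hL : ContDiffOn ℝ 2 L (U ×ˢ Set.univ))
    {H : (Fin n → ℝ) → Fin n → Fin n → ℝ} (hH : ∀ x ∈ U, ∀ b c, H x b c = H x c b)
    (hHess : ∀ x ∈ U, ∀ v a b, pdv (pdv L a) b (x, v) = H x a b) (hx : x ∈ U)
    (v : Fin n → ℝ) :
    L (x, v) = L (x, 0) + ∑ b, pdv L b (x, 0) * v b
      + (1 / 2) * ∑ b, ∑ c, H x b c * v b * v c := by
  have hΩ : IsOpen (U ×ˢ (Set.univ : Set (Fin n → ℝ))) := hU.prod isOpen_univ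
  have hmem : ∀ u : Fin n → ℝ, (x, u) ∈ U ×ˢ (Set.univ : Set (Fin n → ℝ)) :=
    fun _ => ⟨hx, trivial⟩
  have hslice : ∀ a, (fun u => pdv L a (x, u)) = pd (fun u => L (x, u)) a := fun a =>
    funext fun u => pdv_eq_pd_slice
      ((hL.differentiableOn two_ne_zero).differentiableAt (hΩ.mem_nhds (hmem u))) a
  have hpdv : ∀ a u, DifferentiableAt ℝ (pdv L a) (x, u) := fun a u =>
    ((hL.pdv hΩ (m := 1) (by norm_num) a).differentiableOn one_ne_zero).differentiableAt
      (hΩ.mem_nhds (hmem u))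
  have := eq_quadratic_of_pd_pd_eq (ℓ := fun u => L (x, u))
    (hL.comp_contDiff (contDiff_const.prodMk contDiff_id) hmem) (hH x hx)
    (fun u a b => by rw [← hslice, ← pdv_eq_pd_slice (hpdv a u), hHess x hx]) v
  simpa only [← hslice] using this

lemma euler_lagrange_of_quadratic (hU : IsOpen U) (hL : ContDiffOn ℝ 2 L (U ×ˢ Set.univ))
    {B : (Fin n → ℝ) → ℝ} {A : (Fin n → ℝ) → Fin n → ℝ} {H : (Fin n → ℝ) → Fin n → Fin n → ℝ}
    (hB : DifferentiableOn ℝ B U) (hA : ∀ b, DifferentiableOn ℝ (fun y => A y b) U)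
    (hHd : ∀ b c, DifferentiableOn ℝ (fun y => H y b c) U)
    (hH : ∀ x ∈ U, ∀ b c, H x b c = H x c b)
    (hquad : ∀ x ∈ U, ∀ v, L (x, v) = B x + ∑ b, A x b * v b
      + (1 / 2) * ∑ b, ∑ c, H x b c * v b * v c) (hx : x ∈ U) (v : Fin n → ℝ) (a : Fin n) :
    pdx L a (x, v) - ∑ c, pdx (pdv L a) c (x, v) * v c =
      pd B a x + ∑ b, (pd (fun y => A y b) a x - pd (fun y => A y a) b x) * v b
        + ∑ b, ∑ c, ((1 / 2) * pd (fun y => H y b c) a x - pd (fun y => H y a b) c x)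
          * v b * v c := by
  have hΩ : IsOpen (U ×ˢ (Set.univ : Set (Fin n → ℝ))) := hU.prod isOpen_univ
  have hLd : ∀ y ∈ U, DifferentiableAt ℝ L (y, v) := fun y hy =>
    (hL.differentiableOn two_ne_zero).differentiableAt (hΩ.mem_nhds ⟨hy, trivial⟩)
  have hBx : DifferentiableAt ℝ B x := hB.differentiableAt (hU.mem_nhds hx)
  have hAx : ∀ b, DifferentiableAt ℝ (fun y => A y b) x := fun b =>
    (hA b).differentiableAt (hU.mem_nhds hx)
  have hHx : ∀ b c, DifferentiableAt ℝ (fun y => H y b c) x := fun b c =>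
    (hHd b c).differentiableAt (hU.mem_nhds hx)
  have hvel : ∀ y ∈ U, pdv L a (y, v) = A y a + ∑ b, H y a b * v b := fun y hy => by
    rw [pdv_eq_pd_slice (hLd y hy) a, show (fun u => L (y, u)) = _ from funext (hquad y hy),
      pd_add (by fun_prop) (by fun_prop), pd_add (by fun_prop) (by fun_prop), pd_const,
      pd_linear_form, pd_quadratic_form (hH y hy), zero_add]
  have hpdx_pdv : ∀ c, pdx (pdv L a) c (x, v)
      = pd (fun y => A y a) c x + ∑ b, pd (fun y => H y a b) c x * v b := fun c => by
    have hslice : (fun y => pdv L a (y, v)) =ᶠ[nhds x] fun y => A y a + ∑ b, H y a b * v b := by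
      filter_upwards [hU.mem_nhds hx] with y hy using hvel y hy
    rw [pdx_eq_pd_slice (((hL.pdv hΩ (m := 1) (by norm_num) a).differentiableOn
      one_ne_zero).differentiableAt (hΩ.mem_nhds ⟨hx, trivial⟩)), hslice.pd_eq,
      pd_add (hAx a) (by fun_prop), pd_linear_form_coeff (hHx a)]
  have hpdx : pdx L a (x, v) = pd B a x + ∑ b, pd (fun y => A y b) a x * v b
      + (1 / 2) * ∑ b, ∑ c, pd (fun y => H y b c) a x * v b * v c := by
    have hslice : (fun y => L (y, v)) =ᶠ[nhds x]
        fun y => B y + ∑ b, A y b * v b + (1 / 2) * ∑ b, ∑ c, H y b c * v b * v c := by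
      filter_upwards [hU.mem_nhds hx] with y hy using hquad y hy v
    rw [pdx_eq_pd_slice (hLd x hx), hslice.pd_eq, pd_add (by fun_prop) (by fun_prop),
      pd_add hBx (by fun_prop), pd_linear_form_coeff hAx,
      pd_quadratic_form_coeff hHx]
  simp only [hpdx_pdv, hpdx, add_mul, sub_mul, sum_add_distrib, sum_sub_distrib, sum_mul, mul_sum]
  rw [sum_comm (f := fun c b => pd (fun y => H y a b) c x * v b * v c)]
  simp only [mul_assoc]
  ring

lemma sum_mul_force_eq_of_euler_lagrange (hU : IsOpen U) (hL : ContDiffOn ℝ 2 L (U ×ˢ Set.univ))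
    {H : (Fin n → ℝ) → Fin n → Fin n → ℝ} (hHd : ∀ b c, DifferentiableOn ℝ (fun y => H y b c) U)
    (hH : ∀ x ∈ U, ∀ b c, H x b c = H x c b) {F : (Fin n → ℝ) → (Fin n → ℝ) → Fin n → ℝ}
    (hEL : ∀ x ∈ U, ∀ v w : Fin n → ℝ, ∀ a,
      ∑ b, pdv (pdv L a) b (x, v) * w b + ∑ b, pdx (pdv L a) b (x, v) * v b - pdx L a (x, v)
        = ∑ b, H x a b * (w b - F x v b))
    (hx : x ∈ U) (v : Fin n → ℝ) (a : Fin n) :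
    ∑ b, H x a b * F x v b = pd (fun y => L (y, 0)) a x
      + ∑ b, (pd (fun y => pdv L b (y, 0)) a x - pd (fun y => pdv L a (y, 0)) b x) * v b
      + ∑ b, ∑ c, ((1 / 2) * pd (fun y => H y b c) a x - pd (fun y => H y a b) c x)
        * v b * v c := by
  have hHess : ∀ x ∈ U, ∀ v a b, pdv (pdv L a) b (x, v) = H x a b :=
    fun x hx v a b => congrFun (coeff_eq_of_forall_sum_mul_add_eq fun w => by
      rw [← add_sub_assoc]; exact hEL x hx v w a) b
  have hEL₀ := hEL x hx v 0 a
  simp only [Pi.zero_apply, mul_zero, sum_const_zero, zero_add, zero_sub, mul_neg,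
    sum_neg_distrib] at hEL₀
  have hA : ∀ b, DifferentiableOn ℝ (fun y => pdv L b (y, 0)) U := fun b =>
    (hL.pdv (hU.prod isOpen_univ) (m := 1) (by norm_num) b).comp_prodMk_zero.differentiableOn
      one_ne_zero
  rw [← euler_lagrange_of_quadratic hU hL (hL.comp_prodMk_zero.differentiableOn two_ne_zero) hA
    hHd hH (fun x hx v => lagrangian_eq_quadratic hU hL hH hHess hx v) hx v a]
  linarith

end Lagrangian

/-- `Γ[g]^a_{bc} + L^a_{bc}`, where `L` is the disformation of the Weyl non-metricity
`Q_{abc} = ∂_a ω g_{bc}`. -/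
noncomputable def weylConnection (g : (Fin n → ℝ) → Fin n → Fin n → ℝ) (ω : (Fin n → ℝ) → ℝ)
    (x : Fin n → ℝ) (a b c : Fin n) : ℝ :=
  christoffel g x a b c
    + ((1 / 2) * ∑ d, minv (g x) a d * pd ω d x * g x b c
      - (1 / 2) * (pd ω b x * (if a = c then (1 : ℝ) else 0)
        + pd ω c x * (if a = b then (1 : ℝ) else 0)))

lemma sum_quadratic_force_eq_neg_weylConnection {g : (Fin n → ℝ) → Fin n → Fin n → ℝ}
    {ω : (Fin n → ℝ) → ℝ} {x : Fin n → ℝ} (hgsym : ∀ᶠ y in nhds x, ∀ b c, g y b c = g y c b)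
    (hginv : IsUnit (Matrix.of (g x)).det) (hgd : ∀ b c, DifferentiableAt ℝ (fun y => g y b c) x)
    (hω : DifferentiableAt ℝ ω x) (v : Fin n → ℝ) (a : Fin n) :
    ∑ b, ∑ c, (∑ e, Real.exp (ω x) * minv (g x) a e
        * ((1 / 2) * pd (fun y => Real.exp (-ω y) * g y b c) e x
          - pd (fun y => Real.exp (-ω y) * g y e b) c x)) * v b * v c
      = -∑ b, ∑ c, weylConnection g ω x a b c * v b * v c := by
  have hδ : ∀ b c, (if b = c then (1 : ℝ) else 0) = ∑ e, minv (g x) b e * g x e c := by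
    intro b c
    simpa [Matrix.mul_apply, minv, Matrix.one_apply] using
      (congrFun (congrFun (Matrix.nonsing_inv_mul _ hginv) b) c).symm
  have hpdg : ∀ d b c, pd (fun y => g y b c) d x = pd (fun y => g y c b) d x := fun d b c =>
    Filter.EventuallyEq.pd_eq (hgsym.mono fun y hy => hy b c)
  have hgx : ∀ b c, g x b c = g x c b := hgsym.self_of_nhds
  simp only [← neg_mul, ← sum_neg_distrib]
  refine sum_sum_mul_eq_of_add_swap_eq (fun b c => ?_) v
  -- Writing `δ^a_c = g⁻¹^{ae} g_{ec}`, both sides become single sums over `e` of `g⁻¹^{ae} (…)`.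
  simp only [weylConnection, christoffel, pd_exp_neg_mul hω (hgd _ _), hδ]
  simp only [mul_sum, ← sum_add_distrib, ← sum_sub_distrib, ← sum_neg_distrib]
  refine sum_congr rfl fun e _ => ?_
  rw [hpdg c e b, hpdg b e c, hpdg e c b, hgx c b, Real.exp_neg]
  field_simp
  ring

lemma contDiffOn_sum_exp_mul_minv_mul {U : Set (Fin n → ℝ)} {k : WithTop ℕ∞}
    {g : (Fin n → ℝ) → Fin n → Fin n → ℝ} (hg : ∀ b c, ContDiffOn ℝ k (fun y => g y b c) U)
    (hginv : ∀ x ∈ U, IsUnit (Matrix.of (g x)).det) {ω : (Fin n → ℝ) → ℝ}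
    (hω : ContDiffOn ℝ k ω U) {φ : Fin n → (Fin n → ℝ) → ℝ} (hφ : ∀ e, ContDiffOn ℝ k (φ e) U)
    (a : Fin n) :
    ContDiffOn ℝ k (fun x => ∑ e, Real.exp (ω x) * minv (g x) a e * φ e x) U :=
  ContDiffOn.sum fun e _ => ((Real.contDiff_exp.comp_contDiffOn hω).mul
    (contDiffOn_matrix_inv_apply (M := fun x => Matrix.of (g x)) hg hginv a e)).mul (hφ e)

theorem force_variational_multiplier_weyl_general {n : ℕ} (U : Set (Fin n → ℝ)) (hU : IsOpen U)
    (g : (Fin n → ℝ) → Fin n → Fin n → ℝ)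
    (hg : ContDiffOn ℝ (⊤ : ℕ∞) g U)
    (hgsym : ∀ x ∈ U, ∀ a b, g x a b = g x b a)
    (hginv : ∀ x ∈ U, IsUnit (Matrix.of (g x)).det)
    (ω : (Fin n → ℝ) → ℝ) (hω : ContDiffOn ℝ (⊤ : ℕ∞) ω U)
    (F : (Fin n → ℝ) → (Fin n → ℝ) → Fin n → ℝ)
    (L : (Fin n → ℝ) × (Fin n → ℝ) → ℝ)
    (hL : ContDiffOn ℝ (⊤ : ℕ∞) L (U ×ˢ (Set.univ : Set (Fin n → ℝ))))
    (hEL : ∀ x ∈ U, ∀ v w : Fin n → ℝ, ∀ a,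
      ∑ b, pdv (pdv L a) b (x, v) * w b + ∑ b, pdx (pdv L a) b (x, v) * v b
        - pdx L a (x, v) =
      ∑ b, Real.exp (-ω x) * g x a b * (w b - F x v b)) :
    ∃ P : (Fin n → ℝ) → Fin n → Fin n → ℝ, ∃ S : (Fin n → ℝ) → Fin n → ℝ,
      ContDiffOn ℝ (⊤ : ℕ∞) P U ∧ ContDiffOn ℝ (⊤ : ℕ∞) S U ∧
      ∀ x ∈ U, ∀ v : Fin n → ℝ, ∀ a,
        F x v a = - (∑ b, ∑ c,
            (christoffel g x a b c
              + ((1 / 2) * ∑ d, minv (g x) a d * pd ω d x * g x b c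
                - (1 / 2) * (pd ω b x * (if a = c then (1 : ℝ) else 0)
                    + pd ω c x * (if a = b then (1 : ℝ) else 0)))) * v b * v c)
          + ∑ b, P x a b * v b + S x a := by
  have hg' : ∀ b c, ContDiffOn ℝ (⊤ : ℕ∞) (fun y => g y b c) U := fun b c =>
    contDiffOn_pi.mp (contDiffOn_pi.mp hg b) c
  have hA : ∀ b, ContDiffOn ℝ (⊤ : ℕ∞) (fun y => pdv L b (y, 0)) U := fun b =>
    (hL.pdv (hU.prod isOpen_univ) (by simp) b).comp_prodMk_zero
  have hforce := fun x (hx : x ∈ U) => sum_mul_force_eq_of_euler_lagrange hU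
    (hL.of_le (WithTop.coe_le_coe.mpr le_top)) (H := fun y a b => Real.exp (-ω y) * g y a b)
    (fun b c => ((Real.contDiff_exp.comp_contDiffOn hω.neg).mul (hg' b c)).differentiableOn
      (by simp))
    (fun x hx b c => by rw [hgsym x hx b c]) hEL hx
  refine ⟨fun x a b => ∑ e, Real.exp (ω x) * minv (g x) a e
      * (pd (fun y => pdv L b (y, 0)) e x - pd (fun y => pdv L e (y, 0)) b x),
    fun x a => ∑ e, Real.exp (ω x) * minv (g x) a e * pd (fun y => L (y, 0)) e x,
    contDiffOn_pi.mpr fun a => contDiffOn_pi.mpr fun b =>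
      contDiffOn_sum_exp_mul_minv_mul hg' hginv hω (fun e =>
        ((hA b).fderiv_apply_of_isOpen hU (by simp) _).sub
          ((hA e).fderiv_apply_of_isOpen hU (by simp) _)) a,
    contDiffOn_pi.mpr fun a => contDiffOn_sum_exp_mul_minv_mul hg' hginv hω
      (fun e => hL.comp_prodMk_zero.fderiv_apply_of_isOpen hU (by simp) _) a,
    fun x hx v a => ?_⟩
  have hx' : U ∈ nhds x := hU.mem_nhds hx
  have hsolve := eq_sum_minv_mul_of_sum_mul_eq (hginv x hx) (Real.exp_pos _).ne'
    (hforce x hx v) a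
  beta_reduce at hsolve
  rwa [Real.exp_neg, inv_inv, sum_mul_quadratic, sum_quadratic_force_eq_neg_weylConnection
    (Filter.eventually_of_mem hx' hgsym) (hginv x hx)
    (fun b c => ((hg' b c).differentiableOn (by simp)).differentiableAt hx')
    ((hω.differentiableOn (by simp)).differentiableAt hx')] at hsolve

/-- **Most general force variational with multiplier `e^{−ω} g`** (Proposition 3.2): if the
system `e^{−ω} g_{ab}(ẍ^b − F^b)` is the Euler–Lagrange expression of some smooth Lagrangian,
then `F^a = −(Γ[g]^a_{bc} + L^a_{bc}) v^b v^c + P^a_b v^b + S^a`, where `L` is the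
disformation of the Weyl non-metricity `Q_{abc} = ∂_a ω g_{bc}`. -/
theorem force_variational_multiplier_weyl {n : ℕ} (U : Set (Fin n → ℝ)) (hU : IsOpen U)
    (g : (Fin n → ℝ) → Fin n → Fin n → ℝ)
    (hg : ContDiffOn ℝ (⊤ : ℕ∞) g U)
    (hgsym : ∀ x ∈ U, ∀ a b, g x a b = g x b a)
    (hginv : ∀ x ∈ U, IsUnit (Matrix.of (g x)).det)
    (ω : (Fin n → ℝ) → ℝ) (hω : ContDiffOn ℝ (⊤ : ℕ∞) ω U)
    (F : (Fin n → ℝ) → (Fin n → ℝ) → Fin n → ℝ)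
    (hF : ContDiffOn ℝ (⊤ : ℕ∞) (fun p : (Fin n → ℝ) × (Fin n → ℝ) => F p.1 p.2)
      (U ×ˢ (Set.univ : Set (Fin n → ℝ))))
    (L : (Fin n → ℝ) × (Fin n → ℝ) → ℝ)
    (hL : ContDiffOn ℝ (⊤ : ℕ∞) L (U ×ˢ (Set.univ : Set (Fin n → ℝ))))
    (hEL : ∀ x ∈ U, ∀ v w : Fin n → ℝ, ∀ a,
      ∑ b, pdv (pdv L a) b (x, v) * w b + ∑ b, pdx (pdv L a) b (x, v) * v b
        - pdx L a (x, v) =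
      ∑ b, Real.exp (-ω x) * g x a b * (w b - F x v b)) :
    ∃ P : (Fin n → ℝ) → Fin n → Fin n → ℝ, ∃ S : (Fin n → ℝ) → Fin n → ℝ,
      ContDiffOn ℝ (⊤ : ℕ∞) P U ∧ ContDiffOn ℝ (⊤ : ℕ∞) S U ∧
      ∀ x ∈ U, ∀ v : Fin n → ℝ, ∀ a,
        F x v a = - (∑ b, ∑ c,
            (christoffel g x a b c
              + ((1 / 2) * ∑ d, minv (g x) a d * pd ω d x * g x b c
                - (1 / 2) * (pd ω b x * (if a = c then (1 : ℝ) else 0)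
                    + pd ω c x * (if a = b then (1 : ℝ) else 0)))) * v b * v c)
          + ∑ b, P x a b * v b + S x a :=
  force_variational_multiplier_weyl_general U hU g hg hgsym hginv ω hω F L hL hEL
end

section
/- Second Helmholtz condition is equivalent to metric compatibility (eq. (H2) ⟺ eq. (MetricCompatibility)): Let U ⊆ ℝⁿ be open, Γ^a_{bc} : U → ℝ smooth connection coefficients that are symmetric in the lower indices (Γ^a_{bc} = Γ^a_{cb}), H : U → (Fin n → Fin n → ℝ) smooth with H(x) symmetric for every x (H depends only on position, not velocity), and define the force F^a(x,v) := −Σ_{b,c} Γ^a_{bc}(x) v^b v^c. Then the following are equivalent: (i) for all x ∈ U, v ∈ ℝⁿ and all indices a,b: Σ_c v^c ∂_c H_{ab}(x) + ½ Σ_c (H_{ac}(x) (∂F^c/∂v^b)(x,v) + H_{bc}(x) (∂F^c/∂v^a)(x,v)) = 0; (ii) for all x ∈ U and all indices a,b,c: ∇_a H_{bc}(x) := ∂_a H_{bc}(x) − Σ_d (Γ^d_{ab}(x) H_{dc}(x) + Γ^d_{ac}(x) H_{bd}(x)) = 0. -/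
open scoped BigOperators

/-- The quadratic force `F^a(x,v) = −Σ_{b,c} Γ^a_{bc}(x) v^b v^c`. -/
noncomputable def force {n : ℕ} (Γ : (Fin n → ℝ) → Fin n → Fin n → Fin n → ℝ)
    (x v : Fin n → ℝ) (a : Fin n) : ℝ :=
  - ∑ b, ∑ c, Γ x a b c * v b * v c

/-!
For the quadratic force `F^c = −Γ^c_{de} v^d v^e` of a symmetric connection one has
`∂F^c/∂v^b = −2 Γ^c_{bd} v^d`, and substituting this turns the left-hand side of (H2) into the
linear form `v^c ∇_c H_{ab}` in the velocity. A linear form vanishes for every `v` exactly when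
its coefficients vanish.
-/

noncomputable def covDeriv {n : ℕ} (Γ : (Fin n → ℝ) → Fin n → Fin n → Fin n → ℝ)
    (H : (Fin n → ℝ) → Fin n → Fin n → ℝ) (x : Fin n → ℝ) (a b c : Fin n) : ℝ :=
  pd (fun y => H y b c) a x - ∑ d, (Γ x d a b * H x d c + Γ x d a c * H x b d)

noncomputable def helmholtzTwo {n : ℕ} (Γ : (Fin n → ℝ) → Fin n → Fin n → Fin n → ℝ)
    (H : (Fin n → ℝ) → Fin n → Fin n → ℝ) (x v : Fin n → ℝ) (a b : Fin n) : ℝ :=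
  ∑ c, v c * pd (fun y => H y a b) c x
    + (1 / 2) * ∑ c, (H x a c * fderiv ℝ (fun u => force Γ x u c) v (Pi.single b 1)
        + H x b c * fderiv ℝ (fun u => force Γ x u c) v (Pi.single a 1))

section QuadraticForm

variable {𝕜 ι : Type*} [NontriviallyNormedField 𝕜] [Fintype ι]

theorem hasFDerivAt_quadraticForm (A : ι → ι → 𝕜) (v : ι → 𝕜) :
    HasFDerivAt (fun u : ι → 𝕜 => ∑ b, ∑ c, A b c * u b * u c)
      (∑ b, ∑ c, A b c • (v b • (ContinuousLinearMap.proj c : (ι → 𝕜) →L[𝕜] 𝕜)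
        + v c • (ContinuousLinearMap.proj b : (ι → 𝕜) →L[𝕜] 𝕜))) v := by
  refine HasFDerivAt.fun_sum fun b _ => HasFDerivAt.fun_sum fun c _ => ?_
  have hb := (ContinuousLinearMap.proj b : (ι → 𝕜) →L[𝕜] 𝕜).hasFDerivAt (x := v)
  have hc := (ContinuousLinearMap.proj c : (ι → 𝕜) →L[𝕜] 𝕜).hasFDerivAt (x := v)
  simpa [mul_assoc] using (hb.mul hc).const_mul (A b c)

theorem fderiv_quadraticForm_single [DecidableEq ι] (A : ι → ι → 𝕜)
    (hA : ∀ b c, A b c = A c b) (v : ι → 𝕜) (b : ι) :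
    fderiv 𝕜 (fun u : ι → 𝕜 => ∑ b, ∑ c, A b c * u b * u c) v (Pi.single b 1)
      = 2 * ∑ d, A b d * v d := by
  rw [(hasFDerivAt_quadraticForm A v).fderiv]
  simp only [FunLike.coe_sum, Finset.sum_apply, smul_apply, add_apply,
    ContinuousLinearMap.proj_apply, Pi.single_apply, smul_eq_mul, mul_ite, mul_one, mul_zero,
    mul_add, Finset.sum_add_distrib, Finset.sum_ite_eq', Finset.mem_univ, if_true]
  rw [Finset.sum_comm]
  simp only [Finset.sum_ite_eq', Finset.mem_univ, if_true, hA _ b]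
  ring

end QuadraticForm

theorem fderiv_force_single {n : ℕ} (Γ : (Fin n → ℝ) → Fin n → Fin n → Fin n → ℝ)
    (x : Fin n → ℝ) (hΓ : ∀ a b c, Γ x a b c = Γ x a c b) (v : Fin n → ℝ) (c b : Fin n) :
    fderiv ℝ (fun u => force Γ x u c) v (Pi.single b 1) = -2 * ∑ d, Γ x c b d * v d := by
  rw [show (fun u => force Γ x u c) = fun u => -∑ b, ∑ d, Γ x c b d * u b * u d from rfl,
    fderiv_fun_neg, neg_apply, fderiv_quadraticForm_single (Γ x c) (hΓ c)]
  ring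

theorem helmholtzTwo_eq_covDeriv_dotProduct {n : ℕ}
    (Γ : (Fin n → ℝ) → Fin n → Fin n → Fin n → ℝ) (H : (Fin n → ℝ) → Fin n → Fin n → ℝ)
    (x : Fin n → ℝ) (hΓ : ∀ a b c, Γ x a b c = Γ x a c b) (hH : ∀ a b, H x a b = H x b a)
    (v : Fin n → ℝ) (a b : Fin n) :
    helmholtzTwo Γ H x v a b = (fun c => covDeriv Γ H x c a b) ⬝ᵥ v := by
  have connection_terms : ∑ c, ∑ d, (H x a c * (Γ x c b d * v d) + H x b c * (Γ x c a d * v d))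
      = ∑ c, ∑ d, (Γ x d c a * H x d b + Γ x d c b * H x a d) * v c := by
    rw [Finset.sum_comm]
    refine Finset.sum_congr rfl fun c _ => Finset.sum_congr rfl fun d _ => ?_
    rw [hΓ d b c, hΓ d a c, hH b d]
    ring
  calc helmholtzTwo Γ H x v a b
      = ∑ c, pd (fun y => H y a b) c x * v c
          - ∑ c, ∑ d, (H x a c * (Γ x c b d * v d) + H x b c * (Γ x c a d * v d)) := by
        simp only [helmholtzTwo, fderiv_force_single Γ x hΓ, Finset.mul_sum, mul_add,
          Finset.sum_add_distrib, sub_eq_add_neg, neg_add, ← Finset.sum_neg_distrib, mul_comm (v _)]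
        congr 2 <;> exact Finset.sum_congr rfl fun _ _ => Finset.sum_congr rfl fun _ _ => by ring
    _ = (fun c => covDeriv Γ H x c a b) ⬝ᵥ v := by
        simp only [connection_terms, dotProduct, covDeriv, sub_mul, Finset.sum_sub_distrib,
          Finset.sum_mul]

theorem helmholtz_two_iff_metric_compatibility_general {n : ℕ} (U : Set (Fin n → ℝ))
    (Γ : (Fin n → ℝ) → Fin n → Fin n → Fin n → ℝ)
    (hΓsym : ∀ x ∈ U, ∀ a b c, Γ x a b c = Γ x a c b)
    (H : (Fin n → ℝ) → Fin n → Fin n → ℝ)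
    (hHsym : ∀ x ∈ U, ∀ a b, H x a b = H x b a) :
    (∀ x ∈ U, ∀ v : Fin n → ℝ, ∀ a b,
        ∑ c, v c * pd (fun y => H y a b) c x
          + (1 / 2) * ∑ c, (H x a c * fderiv ℝ (fun u => force Γ x u c) v (Pi.single b 1)
              + H x b c * fderiv ℝ (fun u => force Γ x u c) v (Pi.single a 1)) = 0)
    ↔ (∀ x ∈ U, ∀ a b c,
        pd (fun y => H y b c) a x
          - ∑ d, (Γ x d a b * H x d c + Γ x d a c * H x b d) = 0) := by
  change (∀ x ∈ U, ∀ v a b, helmholtzTwo Γ H x v a b = 0)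
    ↔ ∀ x ∈ U, ∀ a b c, covDeriv Γ H x a b c = 0
  refine forall₂_congr fun x hx => ?_
  simp only [helmholtzTwo_eq_covDeriv_dotProduct Γ H x (hΓsym x hx) (hHsym x hx)]
  exact ⟨fun h c a b => congrFun (dotProduct_eq_zero_iff.1 fun v => h v a b) c,
    fun h v a b => dotProduct_eq_zero_iff.2 (funext fun c => h c a b) v⟩

/-- **Second Helmholtz condition ⟺ metric compatibility**: for the force
`F^a = −Γ^a_{bc} v^b v^c` of a symmetric connection and a velocity-independent symmetric `H`,
condition (H2) holds iff `∇_a H_{bc} = 0`. -/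
theorem helmholtz_two_iff_metric_compatibility {n : ℕ} (U : Set (Fin n → ℝ)) (hU : IsOpen U)
    (Γ : (Fin n → ℝ) → Fin n → Fin n → Fin n → ℝ)
    (hΓ : ContDiffOn ℝ (⊤ : ℕ∞) Γ U)
    (hΓsym : ∀ x ∈ U, ∀ a b c, Γ x a b c = Γ x a c b)
    (H : (Fin n → ℝ) → Fin n → Fin n → ℝ)
    (hH : ContDiffOn ℝ (⊤ : ℕ∞) H U)
    (hHsym : ∀ x ∈ U, ∀ a b, H x a b = H x b a) :
    (∀ x ∈ U, ∀ v : Fin n → ℝ, ∀ a b,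
        ∑ c, v c * pd (fun y => H y a b) c x
          + (1 / 2) * ∑ c, (H x a c * fderiv ℝ (fun u => force Γ x u c) v (Pi.single b 1)
              + H x b c * fderiv ℝ (fun u => force Γ x u c) v (Pi.single a 1)) = 0)
    ↔ (∀ x ∈ U, ∀ a b c,
        pd (fun y => H y b c) a x
          - ∑ d, (Γ x d a b * H x d c + Γ x d a c * H x b d) = 0) :=
  helmholtz_two_iff_metric_compatibility_general U Γ hΓsym H hHsym
end

section
/- Reparametrization to affine parameter (content of Proposition 2.2 and of the affine-parametrization step in the main theorem): Let U ⊆ ℝⁿ be open, Γ^a_{bc} : U → ℝ smooth connection coefficients, I ⊆ ℝ an open interval, φ : I → ℝ smooth, and γ : I → U a smooth curve satisfying γ''^a(λ) + Σ_{b,c} Γ^a_{bc}(γ(λ)) γ'^b(λ) γ'^c(λ) = φ(λ) γ'^a(λ) for all λ ∈ I and all indices a. Then there exist an open interval J ⊆ ℝ and a smooth, strictly monotone surjective map σ : J → I such that the reparametrized curve β := γ ∘ σ satisfies the affinely parametrized autoparallel equation: β''^a(s) + Σ_{b,c} Γ^a_{bc}(β(s)) β'^b(s) β'^c(s) = 0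 for all s ∈ J and all indices a. -/
open scoped BigOperators

open Set Filter Topology

theorem ContDiffOn.exists_contDiffOn_hasDerivAt {k : ℕ∞} {f : ℝ → ℝ} {I : Set ℝ}
    (hf : ContDiffOn ℝ k f I) (hI : IsOpen I) (hIc : IsPreconnected I) :
    ∃ F : ℝ → ℝ, ContDiffOn ℝ k F I ∧ ∀ x ∈ I, HasDerivAt F (f x) x := by
  rcases I.eq_empty_or_nonempty with rfl | ⟨x₀, hx₀⟩
  · exact ⟨0, contDiffOn_empty, fun _ => False.elim⟩
  have hF : ∀ x ∈ I, HasDerivAt (fun u => ∫ t in x₀..u, f t) (f x) x := fun x hx =>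
    intervalIntegral.integral_hasDerivAt_right
      ((hf.continuousOn.mono (hIc.ordConnected.uIcc_subset hx₀ hx)).intervalIntegrable)
      (hf.continuousOn.stronglyMeasurableAtFilter hI x hx)
      (hf.continuousOn.continuousAt (hI.mem_nhds hx))
  refine ⟨_, ?_, hF⟩
  have : ContDiffOn ℝ (k + 1) (fun u => ∫ t in x₀..u, f t) I := by
    rw [contDiffOn_succ_iff_deriv_of_isOpen hI]
    exact ⟨fun x hx => (hF x hx).differentiableAt.differentiableWithinAt, by simp,
      hf.congr fun x hx => (hF x hx).deriv⟩
  exact this.of_le le_self_add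

theorem exists_openPartialHomeomorph_of_hasStrictDerivAt {𝕜 : Type*} [NontriviallyNormedField 𝕜]
    [CompleteSpace 𝕜] {f f' : 𝕜 → 𝕜} {I : Set 𝕜} (hI : IsOpen I) (hinj : InjOn f I)
    (hf : ∀ x ∈ I, HasStrictDerivAt f (f' x) x) (hf' : ∀ x ∈ I, f' x ≠ 0) :
    ∃ e : OpenPartialHomeomorph 𝕜 𝕜, e.source = I ∧ ⇑e = f := by
  have hopen : IsOpenMap (I.domRestrict f) := isOpenMap_iff_nhds_le.2 fun x => by
    rw [Set.domRestrict_eq, ← Filter.map_map, map_nhds_subtype_coe_eq_nhds x.2 (hI.mem_nhds x.2),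
      (hf x x.2).map_nhds_eq (hf' x x.2)]
    rfl
  exact ⟨.ofContinuousOpenRestrict (hinj.toPartialEquiv f I)
    (fun x hx => (hf x hx).hasDerivAt.continuousAt.continuousWithinAt) hopen hI, rfl, rfl⟩

theorem exists_reparametrization {k : ℕ∞} {φ : ℝ → ℝ} {I : Set ℝ} (hI : IsOpen I)
    (hIc : IsPreconnected I) (hφ : ContDiffOn ℝ k φ I) :
    ∃ (J : Set ℝ) (σ ρ : ℝ → ℝ), IsOpen J ∧ IsPreconnected J ∧ ContDiffOn ℝ k σ J ∧
      StrictMonoOn σ J ∧ σ '' J = I ∧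
      ∀ z ∈ J, HasDerivAt σ (ρ z) z ∧ HasDerivAt ρ (-(φ (σ z) * ρ z ^ 2)) z := by
  obtain ⟨F, hF, hFd⟩ := hφ.exists_contDiffOn_hasDerivAt hI hIc
  obtain ⟨s, hs, hsd⟩ := (Real.contDiff_exp.comp_contDiffOn hF).exists_contDiffOn_hasDerivAt hI hIc
  have hs_strict : ∀ x ∈ I, HasStrictDerivAt s (Real.exp (F x)) x := fun x hx =>
    hasStrictDerivAt_of_hasDerivAt_of_continuousAt
      (eventually_of_mem (hI.mem_nhds hx) hsd) (hFd x hx).continuousAt.rexp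
  have hmono : StrictMonoOn s I :=
    strictMonoOn_of_deriv_pos (convex_iff_ordConnected.2 hIc.ordConnected)
      (HasDerivAt.continuousOn hsd) fun x hx => by
        rw [hI.interior_eq] at hx
        rw [(hsd x hx).deriv]
        exact Real.exp_pos _
  obtain ⟨e, rfl, rfl⟩ := exists_openPartialHomeomorph_of_hasStrictDerivAt hI hmono.injOn hs_strict
    fun x _ => Real.exp_ne_zero _
  have hσd : ∀ z ∈ e.target, HasDerivAt e.symm (Real.exp (-F (e.symm z))) z := fun z hz => by
    rw [Real.exp_neg]
    exact e.hasDerivAt_symm hz (Real.exp_ne_zero _) (hsd _ (e.map_target hz))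
  refine ⟨e.target, e.symm, fun z => Real.exp (-F (e.symm z)), e.open_target,
    e.image_source_eq_target ▸ hIc.image e e.continuousOn, ?_, ?_, e.symm_image_target_eq_source,
    fun z hz => ⟨hσd z hz, ?_⟩⟩
  · exact fun z hz => (e.contDiffAt_symm_deriv (Real.exp_ne_zero _) hz
      (hsd _ (e.map_target hz)) (hs.contDiffAt (hI.mem_nhds (e.map_target hz)))).contDiffWithinAt
  · intro z₁ hz₁ z₂ hz₂ hlt
    by_contra! hle
    have := hmono.monotoneOn (e.map_target hz₂) (e.map_target hz₁) hle
    rw [e.right_inv hz₁, e.right_inv hz₂] at this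
    exact this.not_gt hlt
  · exact (((hFd _ (e.map_target hz)).comp z (hσd z hz)).neg.exp).congr_deriv
      (by simp only [Pi.neg_apply, Function.comp_apply]; ring)

section Reparametrization

variable {n : ℕ} {γ : ℝ → Fin n → ℝ} {σ ρ : ℝ → ℝ} {a : Fin n}

theorem cderiv_comp {u σ' : ℝ} (hγ : DifferentiableAt ℝ (fun t => γ t a) (σ u))
    (hσ : HasDerivAt σ σ' u) : cderiv (γ ∘ σ) a u = cderiv γ a (σ u) * σ' :=
  (hγ.hasDerivAt.comp u hσ).deriv

theorem cderiv2_comp {z ρ' : ℝ} (hγ : ∀ᶠ u in 𝓝 z, DifferentiableAt ℝ (fun t => γ t a) (σ u))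
    (hγ' : DifferentiableAt ℝ (cderiv γ a) (σ z)) (hσ : ∀ᶠ u in 𝓝 z, HasDerivAt σ (ρ u) u)
    (hρ : HasDerivAt ρ ρ' z) :
    cderiv2 (γ ∘ σ) a z = cderiv2 γ a (σ z) * ρ z ^ 2 + cderiv γ a (σ z) * ρ' := by
  have hchain : HasDerivAt (fun u => cderiv γ a (σ u) * ρ u)
      (cderiv2 γ a (σ z) * ρ z * ρ z + cderiv γ a (σ z) * ρ') z :=
    (hγ'.hasDerivAt.comp z hσ.self_of_nhds).mul hρ
  have hβ' : cderiv (γ ∘ σ) a =ᶠ[𝓝 z] fun u => cderiv γ a (σ u) * ρ u := by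
    filter_upwards [hγ, hσ] with u hγu hσu using cderiv_comp hγu hσu
  rw [cderiv2, hβ'.deriv_eq, hchain.deriv]
  ring

theorem autoparallel_comp {Γ : (Fin n → ℝ) → Fin n → Fin n → Fin n → ℝ} {φ : ℝ → ℝ} {z : ℝ}
    (hγ : ∀ b, ∀ᶠ u in 𝓝 z, DifferentiableAt ℝ (fun t => γ t b) (σ u))
    (hγ' : DifferentiableAt ℝ (cderiv γ a) (σ z)) (hσ : ∀ᶠ u in 𝓝 z, HasDerivAt σ (ρ u) u)
    (hρ : HasDerivAt ρ (-(φ (σ z) * ρ z ^ 2)) z)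
    (heq : cderiv2 γ a (σ z) + ∑ b, ∑ c, Γ (γ (σ z)) a b c * cderiv γ b (σ z) * cderiv γ c (σ z)
      = φ (σ z) * cderiv γ a (σ z)) :
    cderiv2 (γ ∘ σ) a z
      + ∑ b, ∑ c, Γ (γ (σ z)) a b c * cderiv (γ ∘ σ) b z * cderiv (γ ∘ σ) c z = 0 := by
  have hβ' : ∀ b, cderiv (γ ∘ σ) b z = cderiv γ b (σ z) * ρ z := fun b =>
    cderiv_comp (hγ b).self_of_nhds hσ.self_of_nhds
  simp_rw [cderiv2_comp (hγ a) hγ' hσ hρ, hβ']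
  have hsum : ∑ b, ∑ c, Γ (γ (σ z)) a b c * (cderiv γ b (σ z) * ρ z) * (cderiv γ c (σ z) * ρ z)
      = ρ z ^ 2 * ∑ b, ∑ c, Γ (γ (σ z)) a b c * cderiv γ b (σ z) * cderiv γ c (σ z) := by
    simp_rw [Finset.mul_sum]
    exact Finset.sum_congr rfl fun b _ => Finset.sum_congr rfl fun c _ => by ring
  rw [hsum]
  linear_combination ρ z ^ 2 * heq

end Reparametrization

theorem reparametrize_to_affine_general {n : ℕ}
    (Γ : (Fin n → ℝ) → Fin n → Fin n → Fin n → ℝ)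
    (I : Set ℝ) (hI : IsOpen I) (hIconn : IsPreconnected I)
    (φ : ℝ → ℝ) (hφ : ContDiffOn ℝ (⊤ : ℕ∞) φ I)
    (γ : ℝ → Fin n → ℝ) (hγ : ContDiffOn ℝ (⊤ : ℕ∞) γ I)
    (heq : ∀ t ∈ I, ∀ a, cderiv2 γ a t
      + ∑ b, ∑ c, Γ (γ t) a b c * cderiv γ b t * cderiv γ c t = φ t * cderiv γ a t) :
    ∃ (J : Set ℝ) (σ : ℝ → ℝ),
      IsOpen J ∧ IsPreconnected J ∧
      ContDiffOn ℝ (⊤ : ℕ∞) σ J ∧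
      (StrictMonoOn σ J ∨ StrictAntiOn σ J) ∧
      σ '' J = I ∧
      ∀ s ∈ J, ∀ a, cderiv2 (γ ∘ σ) a s
        + ∑ b, ∑ c, Γ (γ (σ s)) a b c * cderiv (γ ∘ σ) b s * cderiv (γ ∘ σ) c s = 0 := by
  obtain ⟨J, σ, ρ, hJ, hJconn, hσ, hmono, himage, hderiv⟩ :=
    exists_reparametrization hI hIconn hφ
  have hmaps : ∀ u ∈ J, σ u ∈ I := fun u hu => himage ▸ mem_image_of_mem σ hu
  have hγ_diff : ∀ b, ∀ x ∈ I, DifferentiableAt ℝ (fun t => γ t b) x := fun b x hx =>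
    ((contDiffOn_pi.1 hγ b).differentiableOn (by simp)).differentiableAt (hI.mem_nhds hx)
  have hγ'_diff : ∀ b, ∀ x ∈ I, DifferentiableAt ℝ (cderiv γ b) x := fun b x hx =>
    ((contDiffOn_pi.1 hγ b).deriv_of_isOpen hI (m := 1) (WithTop.coe_le_coe.2 le_top)
      |>.differentiableOn one_ne_zero).differentiableAt (hI.mem_nhds hx)
  refine ⟨J, σ, hJ, hJconn, hσ, Or.inl hmono, himage, fun z hz a => ?_⟩
  have hnear : ∀ᶠ u in 𝓝 z, u ∈ J := hJ.mem_nhds hz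
  exact autoparallel_comp
    (fun b => hnear.mono fun u hu => hγ_diff b _ (hmaps u hu)) (hγ'_diff a _ (hmaps z hz))
    (hnear.mono fun u hu => (hderiv u hu).1) (hderiv z hz).2 (heq _ (hmaps z hz) a)

/-- **Reparametrization to affine parameter**: a curve satisfying the autoparallel equation
up to a term `φ(λ) γ'^a(λ)` can be reparametrized by a smooth, strictly monotone surjective
`σ : J → I` so that `β = γ ∘ σ` satisfies the affinely parametrized autoparallel equation. -/
theorem reparametrize_to_affine {n : ℕ} (U : Set (Fin n → ℝ)) (hU : IsOpen U)
    (Γ : (Fin n → ℝ) → Fin n → Fin n → Fin n → ℝ)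
    (hΓ : ContDiffOn ℝ (⊤ : ℕ∞) Γ U)
    (I : Set ℝ) (hI : IsOpen I) (hIconn : IsPreconnected I)
    (φ : ℝ → ℝ) (hφ : ContDiffOn ℝ (⊤ : ℕ∞) φ I)
    (γ : ℝ → Fin n → ℝ) (hγ : ContDiffOn ℝ (⊤ : ℕ∞) γ I)
    (hmaps : ∀ t ∈ I, γ t ∈ U)
    (heq : ∀ t ∈ I, ∀ a, cderiv2 γ a t
      + ∑ b, ∑ c, Γ (γ t) a b c * cderiv γ b t * cderiv γ c t = φ t * cderiv γ a t) :
    ∃ (J : Set ℝ) (σ : ℝ → ℝ),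
      IsOpen J ∧ IsPreconnected J ∧
      ContDiffOn ℝ (⊤ : ℕ∞) σ J ∧
      (StrictMonoOn σ J ∨ StrictAntiOn σ J) ∧
      σ '' J = I ∧
      ∀ s ∈ J, ∀ a, cderiv2 (γ ∘ σ) a s
        + ∑ b, ∑ c, Γ (γ (σ s)) a b c * cderiv (γ ∘ σ) b s * cderiv (γ ∘ σ) c s = 0 :=
  reparametrize_to_affine_general Γ I hI hIconn φ hφ γ hγ heq
end
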